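/- Let K be a field and suppose an (n+m)×(n+m) matrix A over K has the form A = 1 − (Matrix.fromBlocks 1 G 0 1) · (Matrix.fromBlocks D 0 K' L), where D is n×n, L is m×m and invertible, G is n×m and K' is m×n. Then for every k and all finsets S, T ⊆ Fin n with S.card = T.card = k, one has ∑_{W ⊆ Fin m} (−1)^{W.card} · det A[Ŝ ∪ Ŵ, T̂ ∪ Ŵ] = det L · det (1−D)[S,T]. -/

import Mathlib

open Matrix

/-- Determinant of the submatrix of `A` with rows indexed by the elements of `S` and
columns indexed by the elements of `T`, each listed in increasing order.
Defined to be `0` if the cardinalities of `S` and `T` differ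
(the empty determinant is `1`). -/
noncomputable def fminor {ι R : Type*} [LinearOrder ι] [CommRing R]
    (A : Matrix ι ι R) (S T : Finset ι) : R :=
  if h : S.card = T.card then
    (Matrix.of fun i j : Fin T.card =>
      A (S.orderEmbOfFin h i) (T.orderEmbOfFin rfl j)).det
  else 0

/-- `Fin n ⊕ Fin m` linearly ordered so that every element of the left summand precedes
every element of the right summand, each summand with its natural order. -/
abbrev SumLexIdx (n m : ℕ) := Lex (Fin n ⊕ Fin m)

/-- Inclusion of `Fin n` as the left block. -/
def inlL {n m : ℕ} (i : Fin n) : SumLexIdx n m := toLex (Sum.inl i)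

/-- Inclusion of `Fin m` as the right block. -/
def inrL {n m : ℕ} (j : Fin m) : SumLexIdx n m := toLex (Sum.inr j)

/-- View a matrix indexed by `Fin n ⊕ Fin m` as a matrix indexed by the linearly
ordered index type `SumLexIdx n m`. -/
def toLexMat {n m : ℕ} {R : Type*} (A : Matrix (Fin n ⊕ Fin m) (Fin n ⊕ Fin m) R) :
    Matrix (SumLexIdx n m) (SumLexIdx n m) R := fun i j => A (ofLex i) (ofLex j)

/-!
Expanding `det (N + diag(0, 1))` multilinearly in the rows gives the sum of the minors of `N` on
`ι ∪ W`, `W` running over the subsets of the second block; negating the columns of the second block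
turns this into the alternating sum of the minors. Applied to the block entries of `A` restricted to
rows `S` and columns `T`, the left-hand side becomes `det [[X, G_S L], [C, L]]` with
`X = (1 - D - G K')[S, T]` and `C = -K'[·, T]`. Factoring out `[[1, G_S], [0, 1]]` leaves a block
lower-triangular matrix with diagonal blocks `X - G_S C = (1 - D)[S, T]` and `L`.
-/

open Finset

namespace Matrix

theorem fromBlocks_submatrix_sum_map {ι κ ι' κ' α β γ δ R : Type*} (A : Matrix ι κ R)
    (B : Matrix ι κ' R) (C : Matrix ι' κ R) (D : Matrix ι' κ' R) (f : α → ι) (g : β → ι')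
    (f' : γ → κ) (g' : δ → κ') :
    (fromBlocks A B C D).submatrix (Sum.map f g) (Sum.map f' g') =
      fromBlocks (A.submatrix f f') (B.submatrix f g') (C.submatrix g f') (D.submatrix g g') := by
  ext (i | i) (j | j) <;> rfl

variable {ι κ R : Type*} [Fintype ι] [DecidableEq ι] [Fintype κ] [DecidableEq κ] [CommRing R]

theorem det_piecewise_diagonal (N : Matrix ι ι R) (d : ι → R) (t : Finset ι) :
    det (of fun i => if i ∈ t then N i else diagonal d i) =
      (∏ i ∈ tᶜ, d i) * det (N.submatrix ((↑) : t → ι) (↑)) := by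
  rw [twoBlockTriangular_det _ (· ∈ t), mul_comm]
  · have h₁ : toSquareBlockProp (of fun i => if i ∈ t then N i else diagonal d i) (· ∈ t) =
        N.submatrix ((↑) : t → ι) (↑) := by
      ext i j
      simp [toSquareBlockProp_def]
    have h₂ : toSquareBlockProp (of fun i => if i ∈ t then N i else diagonal d i) (· ∉ t) =
        diagonal fun i : {i // i ∉ t} => d i := by
      ext i j
      simp [toSquareBlockProp_def, i.2, diagonal_apply, Subtype.ext_iff]
    rw [h₁, h₂, det_diagonal]
    congr 1
    · convert (prod_subtype tᶜ (fun _ => mem_compl) d).symm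
    · convert rfl
  · intro i hi j hj
    simp [hi, diagonal_apply_ne _ (ne_of_mem_of_not_mem hj hi).symm]

theorem det_add_diagonal (N : Matrix ι ι R) (d : ι → R) :
    det (N + diagonal d) =
      ∑ t : Finset ι, (∏ i ∈ tᶜ, d i) * det (N.submatrix ((↑) : t → ι) (↑)) :=
  (detRowAlternating.toMultilinearMap.map_add_univ N (diagonal d)).trans
    (sum_congr rfl fun t _ => det_piecewise_diagonal N d t)

theorem det_add_fromBlocks_zero_one (N : Matrix (ι ⊕ κ) (ι ⊕ κ) R) :
    det (N + fromBlocks 0 0 0 1) =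
      ∑ W : Finset κ, det (N.submatrix (Sum.map id ((↑) : W → κ)) (Sum.map id (↑))) := by
  have hP : (fromBlocks 0 0 0 1 : Matrix (ι ⊕ κ) (ι ⊕ κ) R) = diagonal (Sum.elim 0 1) := by
    rw [← fromBlocks_diagonal, Pi.zero_def, diagonal_zero, Pi.one_def, diagonal_one]
  rw [hP, det_add_diagonal, ← Finset.sumEquiv.symm.toEquiv.sum_comp, Fintype.sum_prod_type,
    sum_eq_single_of_mem univ (mem_univ _)]
  · refine sum_congr rfl fun W _ => ?_
    have hprod : ∏ i ∈ (univ.disjSum W)ᶜ, (Sum.elim 0 1 : ι ⊕ κ → R) i = 1 :=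
      prod_eq_one fun x hx => by cases x <;> simp_all
    let e : ι ⊕ W ≃ (univ.disjSum W : Finset (ι ⊕ κ)) :=
      Equiv.ofBijective (fun x => ⟨Sum.map id (↑) x, by cases x <;> simp⟩)
        ⟨fun x y h => Sum.map_injective.2 ⟨Function.injective_id, Subtype.val_injective⟩
            (congrArg Subtype.val h), by
          rintro ⟨i | j, h⟩
          exacts [⟨.inl i, rfl⟩, ⟨.inr ⟨j, by simpa using h⟩, rfl⟩]⟩
    exact (congrArg (· * _) hprod).trans ((one_mul _).trans (det_submatrix_equiv_self e _).symm)
  · intro U _ hU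
    obtain ⟨i, hi⟩ := not_forall.mp (mt eq_univ_iff_forall.mpr hU)
    refine sum_eq_zero fun W _ => ?_
    rw [prod_eq_zero (i := Sum.inl i) (by simpa using hi) rfl, zero_mul]

theorem sum_neg_one_pow_card_mul_det_fromBlocks_submatrix
    (M₁₁ : Matrix ι ι R) (M₁₂ : Matrix ι κ R) (M₂₁ : Matrix κ ι R) (M₂₂ : Matrix κ κ R) :
    ∑ W : Finset κ, (-1) ^ #W * det ((fromBlocks M₁₁ M₁₂ M₂₁ M₂₂).submatrix
        (Sum.map id ((↑) : W → κ)) (Sum.map id (↑))) =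
      det (fromBlocks M₁₁ (-M₁₂) M₂₁ (1 - M₂₂)) := by
  have hsplit : fromBlocks M₁₁ (-M₁₂) M₂₁ (1 - M₂₂) =
      fromBlocks M₁₁ (-M₁₂) M₂₁ (-M₂₂) + fromBlocks 0 0 0 1 := by
    rw [fromBlocks_add]; simp [sub_eq_neg_add]
  rw [hsplit, det_add_fromBlocks_zero_one]
  refine sum_congr rfl fun W _ => ?_
  have hsign : ∏ j : ι ⊕ W, (Sum.elim 1 (-1) : ι ⊕ W → R) j = (-1) ^ #W := by
    simp [Fintype.prod_sum_type]
  rw [← hsign, ← det_mul_row]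
  congr 1
  ext (i | i) (j | j) <;> simp

theorem det_fromBlocks_mul₁₂ (X : Matrix ι ι R) (G : Matrix ι κ R) (C : Matrix κ ι R)
    (L : Matrix κ κ R) : det (fromBlocks X (G * L) C L) = det (X - G * C) * det L := by
  have : fromBlocks X (G * L) C L = fromBlocks 1 G 0 1 * fromBlocks (X - G * C) 0 C L := by
    simp [fromBlocks_multiply]
  rw [this, det_mul, det_fromBlocks_zero₂₁, det_fromBlocks_zero₁₂]
  simp

end Matrix

theorem Sum.Lex.strictMono_map {α β γ δ : Type*} [Preorder α] [Preorder β] [Preorder γ]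
    [Preorder δ] {f : α → γ} {g : β → δ} (hf : StrictMono f) (hg : StrictMono g) :
    StrictMono fun x : α ⊕ₗ β => toLex (Sum.map f g (ofLex x)) := by
  rintro (a | a) (b | b) h
  · exact Sum.Lex.inl_lt_inl_iff.2 (hf (Sum.Lex.inl_lt_inl_iff.1 h))
  · exact Sum.Lex.inl_lt_inr _ _
  · exact absurd h Sum.Lex.not_inr_lt_inl
  · exact Sum.Lex.inr_lt_inr_iff.2 (hg (Sum.Lex.inr_lt_inr_iff.1 h))

theorem fminor_eq_det_submatrix {ι α R : Type*} [LinearOrder ι] [CommRing R] [Fintype α]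
    [LinearOrder α] (A : Matrix ι ι R) {S T : Finset ι} {f g : α → ι}
    (hf : StrictMono f) (hg : StrictMono g) (hfS : ∀ a, f a ∈ S) (hgT : ∀ a, g a ∈ T)
    (hS : #S = Fintype.card α) (hT : #T = Fintype.card α) :
    fminor A S T = det (A.submatrix f g) := by
  have hST : #S = #T := hS.trans hT.symm
  let e := Fintype.orderIsoFinOfCardEq α hT.symm
  have hfe : f ∘ e = S.orderEmbOfFin hST :=
    orderEmbOfFin_unique hST (fun _ => hfS _) (hf.comp e.strictMono)
  have hge : g ∘ e = T.orderEmbOfFin rfl :=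
    orderEmbOfFin_unique rfl (fun _ => hgT _) (hg.comp e.strictMono)
  rw [fminor, dif_pos hST, ← det_submatrix_equiv_self e.toEquiv, ← hfe, ← hge]
  rfl

theorem image_inlL_union_image_inrL {n m : ℕ} (S : Finset (Fin n)) (W : Finset (Fin m)) :
    S.image inlL ∪ W.image inrL = (S.disjSum W).map toLex.toEmbedding := by
  ext x
  induction x using Lex.rec with | _ x => ?_
  cases x <;> simp [inlL, inrL]

theorem fminor_toLexMat_image_union {R : Type*} [CommRing R] {n m : ℕ}
    (A : Matrix (Fin n ⊕ Fin m) (Fin n ⊕ Fin m) R) (S T : Finset (Fin n)) (W : Finset (Fin m))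
    (h : #S = #T) :
    fminor (toLexMat A) (S.image inlL ∪ W.image inrL) (T.image inlL ∪ W.image inrL) =
      det (A.submatrix (Sum.map (S.orderEmbOfFin h) ((↑) : W → Fin m))
        (Sum.map (T.orderEmbOfFin rfl) (↑))) := by
  rw [image_inlL_union_image_inrL, image_inlL_union_image_inrL]
  refine fminor_eq_det_submatrix (α := Fin #T ⊕ₗ W) (toLexMat A)
    (Sum.Lex.strictMono_map (orderEmbOfFin S h).strictMono (Subtype.strictMono_coe _))
    (Sum.Lex.strictMono_map (orderEmbOfFin T rfl).strictMono (Subtype.strictMono_coe _))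
    ?_ ?_ ?_ ?_
  · rintro (a | a) <;> exact mem_map_of_mem _ (by simp)
  · rintro (a | a) <;> exact mem_map_of_mem _ (by simp)
  · simp [h]
  · simp

theorem alt_sum_minors_of_UL_factorization_general
    {K : Type*} [Field K] {n m : ℕ}
    (A : Matrix (Fin n ⊕ Fin m) (Fin n ⊕ Fin m) K)
    (D : Matrix (Fin n) (Fin n) K) (G : Matrix (Fin n) (Fin m) K)
    (K' : Matrix (Fin m) (Fin n) K) (L : Matrix (Fin m) (Fin m) K)
    (hA : A = 1 - Matrix.fromBlocks 1 G 0 1 * Matrix.fromBlocks D 0 K' L)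
    (k : ℕ) (S T : Finset (Fin n)) (hS : S.card = k) (hT : T.card = k) :
    ∑ W : Finset (Fin m), (-1 : K) ^ W.card *
        fminor (toLexMat A) (S.image inlL ∪ W.image inrL)
          (T.image inlL ∪ W.image inrL)
      = L.det * fminor (1 - D) S T := by
  have hST : #S = #T := hS.trans hT.symm
  set fS := S.orderEmbOfFin hST
  set fT := T.orderEmbOfFin rfl
  have hA_blocks : A = fromBlocks (1 - (D + G * K')) (-(G * L)) (-K') (1 - L) := by
    rw [hA, fromBlocks_multiply, ← fromBlocks_one, sub_eq_add_neg, fromBlocks_neg, fromBlocks_add]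
    simp [sub_eq_add_neg, add_comm]
  have hminor (W : Finset (Fin m)) :
      fminor (toLexMat A) (S.image inlL ∪ W.image inrL) (T.image inlL ∪ W.image inrL) =
        det ((fromBlocks ((1 - (D + G * K')).submatrix fS fT) ((-(G * L)).submatrix fS id)
              ((-K').submatrix id fT) (1 - L)).submatrix
            (Sum.map id ((↑) : W → Fin m)) (Sum.map id (↑))) := by
    rw [fminor_toLexMat_image_union A S T W hST, hA_blocks, fromBlocks_submatrix_sum_map,
      fromBlocks_submatrix_sum_map]
    rfl
  have hGL : -(-(G * L)).submatrix fS id = G.submatrix fS id * L := by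
    ext i j
    simp [Matrix.mul_apply]
  have hschur : (1 - (D + G * K')).submatrix fS fT - G.submatrix fS id * (-K').submatrix id fT =
      (1 - D).submatrix fS fT := by
    ext i j
    simp [Matrix.mul_apply]
    ring
  simp_rw [hminor]
  rw [sum_neg_one_pow_card_mul_det_fromBlocks_submatrix, sub_sub_cancel, hGL,
    det_fromBlocks_mul₁₂, hschur, mul_comm, fminor, dif_pos hST]
  rfl

/-- If `A = 1 - (fromBlocks 1 G 0 1) * (fromBlocks D 0 K' L)` with `L` invertible,
then the alternating sum over subsets `W` of the right block of the minors of `A` on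
rows `Ŝ ∪ Ŵ` and columns `T̂ ∪ Ŵ` equals `det L` times the minor of `1 - D`. -/
theorem alt_sum_minors_of_UL_factorization
    {K : Type*} [Field K] {n m : ℕ}
    (A : Matrix (Fin n ⊕ Fin m) (Fin n ⊕ Fin m) K)
    (D : Matrix (Fin n) (Fin n) K) (G : Matrix (Fin n) (Fin m) K)
    (K' : Matrix (Fin m) (Fin n) K) (L : Matrix (Fin m) (Fin m) K)
    (hL : IsUnit L.det)
    (hA : A = 1 - Matrix.fromBlocks 1 G 0 1 * Matrix.fromBlocks D 0 K' L)
    (k : ℕ) (S T : Finset (Fin n)) (hS : S.card = k) (hT : T.card = k) :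
    ∑ W : Finset (Fin m), (-1 : K) ^ W.card *
        fminor (toLexMat A) (S.image inlL ∪ W.image inrL)
          (T.image inlL ∪ W.image inrL)
      = L.det * fminor (1 - D) S T :=
  alt_sum_minors_of_UL_factorization_general A D G K' L hA k S T hS hT
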